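/- arXiv:2003.04825 — 2 statements merged into one kernel-verified Lean document; each statement's English description precedes it below -/
import Mathlib

section
/- Let σ ∈ S_n be the cycle (λ+1, λ+2, ..., λ+r) for some 0 ≤ λ and λ + r ≤ n. Then Q_σ(x_1,...,x_n) = (x_{λ+1} + x_{λ+2} + ... + x_{λ+r-1}) · x_{λ+r}. -/
open MvPolynomial

/-- `Q_g(x_1,…,x_n) = Σ_{1≤i<j≤n} ε_{ij}(g) x_i x_j` where `ε_{ij}(g) = 1` if `g(i) > g(j)`
and `0` otherwise.  (Indices are `0`-based: the variable `X i` stands for `x_{i+1}`.) -/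
noncomputable def Qpoly {n : ℕ} (g : Equiv.Perm (Fin n)) : MvPolynomial (Fin n) ℤ :=
  ∑ p ∈ Finset.univ.filter (fun p : Fin n × Fin n => p.1 < p.2 ∧ g p.2 < g p.1),
    X p.1 * X p.2

/-- If `σ` is the cycle `(λ+1, λ+2, …, λ+r)` (in `1`-based notation; in our `0`-based
indexing it cyclically moves the positions `lam, lam+1, …, lam+r-1` and fixes everything
else), then `Q_σ = (x_{λ+1} + … + x_{λ+r-1}) · x_{λ+r}`. -/
theorem stmt_5 {n : ℕ} (lam r : ℕ) (hr : 1 ≤ r) (hn : lam + r ≤ n)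
    (σ : Equiv.Perm (Fin n))
    (hfix : ∀ i : Fin n, ((i : ℕ) < lam ∨ lam + r ≤ (i : ℕ)) → σ i = i)
    (hmove : ∀ i : Fin n, lam ≤ (i : ℕ) → (i : ℕ) + 1 < lam + r → (σ i : ℕ) = (i : ℕ) + 1)
    (hlast : ∀ i : Fin n, (i : ℕ) = lam + r - 1 → (σ i : ℕ) = lam) :
    Qpoly σ =
      (∑ i ∈ Finset.univ.filter (fun i : Fin n => lam ≤ (i : ℕ) ∧ (i : ℕ) + 1 < lam + r),
          X i) *
        X (⟨lam + r - 1, by omega⟩ : Fin n) := by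
  set last : Fin n := (⟨lam + r - 1, by omega⟩ : Fin n) with hlastdef
  have hlastval : (last : ℕ) = lam + r - 1 := rfl
  have hσ : ∀ i : Fin n, (σ i : ℕ) =
      if (i : ℕ) < lam ∨ lam + r ≤ (i : ℕ) then (i : ℕ)
      else if (i : ℕ) = lam + r - 1 then lam else (i : ℕ) + 1 := by
    intro i
    split_ifs with h1 h2
    · rw [hfix i h1]
    · exact hlast i h2
    · exact hmove i (by omega) (by omega)
  have hset : Finset.univ.filter (fun p : Fin n × Fin n => p.1 < p.2 ∧ σ p.2 < σ p.1) =
      (Finset.univ.filter (fun i : Fin n => lam ≤ (i : ℕ) ∧ (i : ℕ) + 1 < lam + r)).image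
        (fun i => (i, last)) := by
    ext ⟨i, j⟩
    simp only [Finset.mem_filter, Finset.mem_image, Finset.mem_univ, true_and,
      Prod.mk.injEq, Fin.lt_def]
    have hi := hσ i
    have hj := hσ j
    constructor
    · rintro ⟨h1, h2⟩
      have hkey : (lam ≤ (i : ℕ) ∧ (i : ℕ) + 1 < lam + r) ∧ (j : ℕ) = lam + r - 1 := by
        split_ifs at hi hj <;> omega
      exact ⟨i, hkey.1, rfl, Fin.ext (by omega)⟩
    · rintro ⟨a, ha, rfl, rfl⟩
      split_ifs at hi hj <;> omega
  rw [Qpoly, hset, Finset.sum_image (by intro a _ b _ h; exact (Prod.mk.injEq .. ▸ h).1),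
    Finset.sum_mul]
end

section
/- Pólya enumeration theorem: let X = {x_1,...,x_r} be a finite set of colors and G ≤ S_n. For each orbit of G on X^n, recording the multiset of colors used, let N_{(k_1,...,k_r)} be the number of orbits using color x_i exactly k_i times. Then Σ N_{(k_1,...,k_r)} t_1^{k_1}···t_r^{k_r} = Z_G(p_1, p_2, ..., p_n), where p_j = t_1^j + ... + t_r^j is the j-th power sum and Z_G is the cycle index of G. -/
/-! Weighted Burnside lemma: the weight `∏ j, t (x j)` of a colouring is constant on `G`-orbits,
so summing it over the pairs `(g, x)` with `g • x = x` counts every orbit `|G|` times.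
A colouring is fixed by `g` exactly when it is constant on the cycles of `g`, so the weighted
count of the colourings fixed by `g` factors over these cycles, a cycle of length `j`
contributing the power sum `p_j = ∑ i, t i ^ j`; grouping the cycles by length gives the term
`∏ j, p_j ^ m_j(g)` of the cycle index. -/

open MvPolynomial

def cycleCount {n : ℕ} (g : Equiv.Perm (Fin n)) (r : ℕ) : ℕ :=
  if r = 1 then (Finset.univ.filter fun i => g i = i).card
  else Multiset.count r g.cycleType

/-- `S_n` acts on `X^n = (Fin n → X)` by permuting coordinates: `(g • x) i = x (g⁻¹ i)`. -/
instance permArrowAction {n : ℕ} {X : Type*} : MulAction (Equiv.Perm (Fin n)) (Fin n → X) where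
  smul g x := x ∘ ⇑g⁻¹
  one_smul x := by
    show x ∘ ⇑(1 : Equiv.Perm (Fin n))⁻¹ = x
    funext i; simp
  mul_smul g h x := by
    show x ∘ ⇑(g * h)⁻¹ = (x ∘ ⇑h⁻¹) ∘ ⇑g⁻¹
    funext i; simp [mul_inv_rev, Function.comp, Equiv.Perm.mul_apply]

open Finset

lemma Finset.prod_pow_card_filter_eq_prod {ι β M : Type*} [Fintype ι] [Fintype β] [DecidableEq β]
    [CommMonoid M] (t : β → M) (x : ι → β) : ∏ i, t i ^ #{j | x j = i} = ∏ j, t (x j) := by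
  rw [← prod_fiberwise' univ x t]
  simp_rw [prod_const]

namespace MulAction

variable {G X M : Type*} [Group G] [MulAction G X] [Fintype G] [Fintype X] [DecidableEq X]
  [Fintype (Quotient (orbitRel G X))] [AddCommMonoid M]

theorem sum_sum_fixed_eq_card_smul_sum_orbits (w : X → M) (hw : ∀ (g : G) x, w (g • x) = w x) :
    ∑ g : G, ∑ x with g • x = x, w x =
      Fintype.card G • ∑ ω : Quotient (orbitRel G X), w ω.out := by
  classical
  have hw_out (x : X) : w (Quotient.mk (orbitRel G X) x).out = w x := by
    obtain ⟨g, hg⟩ := orbitRel_apply.mp (Quotient.mk_out (s := orbitRel G X) x)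
    rw [← hg, hw]
  calc ∑ g : G, ∑ x with g • x = x, w x
      = ∑ p : Σ g : G, fixedBy X g, w p.2 := by
        rw [Fintype.sum_sigma]
        exact sum_congr rfl fun g _ => sum_subtype _ (by simp) w
    _ = ∑ q : Quotient (orbitRel G X) × G, w q.1.out :=
        Fintype.sum_equiv (sigmaFixedByEquivOrbitsProdGroup G X) _ _ fun p => (hw_out p.2).symm
    _ = _ := by simp [Fintype.sum_prod_type, smul_sum]

end MulAction

namespace Equiv.Perm

variable {α : Type*} [Fintype α] [DecidableEq α] {g : Perm α}

-- Unlike `cycleFactorsFinset`, this counts the fixed points of `g` as cycles of length one.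
abbrev Cycles (g : Perm α) := Quotient (SameCycle.setoid g)

instance (g : Perm α) : DecidableEq (Cycles g) :=
  @Quotient.decidableEq _ _ (inferInstanceAs (DecidableRel g.SameCycle))

instance (g : Perm α) : Fintype (Cycles g) :=
  @Quotient.fintype _ _ _ (inferInstanceAs (DecidableRel g.SameCycle))

def cycleSize (g : Perm α) (c : Cycles g) : ℕ := #{a | (⟦a⟧ : Cycles g) = c}

omit [Fintype α] [DecidableEq α] in
lemma mk_eq_mk_iff_sameCycle {a b : α} : (⟦a⟧ : Cycles g) = ⟦b⟧ ↔ g.SameCycle a b := Quotient.eq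

lemma filter_mk_eq_of_apply_eq {a : α} (ha : g a = a) :
    ({b | (⟦b⟧ : Cycles g) = ⟦a⟧} : Finset α) = {a} := by
  ext b
  simp only [mem_filter, mem_univ, true_and, mem_singleton, mk_eq_mk_iff_sameCycle]
  exact ⟨fun h => h.eq_of_right ha, fun h => h ▸ SameCycle.refl g b⟩

lemma filter_mk_eq_of_apply_ne {a : α} (ha : g a ≠ a) :
    ({b | (⟦b⟧ : Cycles g) = ⟦a⟧} : Finset α) = (g.cycleOf a).support := by
  ext b
  simp only [mem_filter, mem_univ, true_and, mk_eq_mk_iff_sameCycle, mem_support_cycleOf_iff' ha]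
  exact ⟨SameCycle.symm, SameCycle.symm⟩

lemma cycleSize_mk_of_apply_eq {a : α} (ha : g a = a) : cycleSize g ⟦a⟧ = 1 := by
  rw [cycleSize, filter_mk_eq_of_apply_eq ha, card_singleton]

lemma cycleSize_mk_of_apply_ne {a : α} (ha : g a ≠ a) :
    cycleSize g ⟦a⟧ = #(g.cycleOf a).support := by
  rw [cycleSize, filter_mk_eq_of_apply_ne ha]

lemma two_le_cycleSize_mk_iff {a : α} : 2 ≤ cycleSize g ⟦a⟧ ↔ g a ≠ a := by
  by_cases ha : g a = a
  · simp [cycleSize_mk_of_apply_eq ha, ha]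
  · simp [cycleSize_mk_of_apply_ne ha, ha]

lemma one_le_cycleSize (c : Cycles g) : 1 ≤ cycleSize g c :=
  card_pos.mpr ⟨c.out, by simp⟩

lemma cycleSize_le_card (c : Cycles g) : cycleSize g c ≤ Fintype.card α :=
  card_filter_le _ _

lemma card_cycleSize_eq_one : #{c : Cycles g | cycleSize g c = 1} = #{a | g a = a} := by
  symm
  refine card_nbij (fun a => ⟦a⟧) (fun a ha => ?_) (fun a ha b _ hab => ?_) (fun c hc => ?_)
  · simpa using cycleSize_mk_of_apply_eq (mem_filter.mp ha).2
  · have : b ∈ ({a} : Finset α) := by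
      rw [← filter_mk_eq_of_apply_eq (mem_filter.mp ha).2]
      simpa using hab.symm
    exact (mem_singleton.mp this).symm
  · induction c using Quotient.inductionOn with
    | h a =>
      have hc : cycleSize g ⟦a⟧ = 1 := (mem_filter.mp hc).2
      have ha : g a = a := by
        by_contra ha
        have := two_le_cycleSize_mk_iff.mpr ha
        omega
      exact ⟨a, mem_filter.mpr ⟨mem_univ a, ha⟩, rfl⟩

lemma card_cycleSize_eq_count_cycleType {k : ℕ} (hk : 2 ≤ k) :
    #{c : Cycles g | cycleSize g c = k} = g.cycleType.count k := by
  rw [cycleType_def, Multiset.count_map]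
  change _ = #{d ∈ g.cycleFactorsFinset | k = #d.support}
  refine card_nbij (Quotient.lift g.cycleOf fun _ _ => SameCycle.cycleOf_eq) ?_ ?_ ?_
  · refine Quotient.ind fun a hc => ?_
    replace hc : cycleSize g ⟦a⟧ = k := (mem_filter.mp hc).2
    have ha : g a ≠ a := two_le_cycleSize_mk_iff.mp (hc ▸ hk)
    exact mem_filter.mpr ⟨cycleOf_mem_cycleFactorsFinset_iff.mpr (mem_support.mpr ha),
      by rw [← hc, cycleSize_mk_of_apply_ne ha]; rfl⟩
  · refine Quotient.ind fun a ha => Quotient.ind fun b hb hab => ?_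
    have ha : g a ≠ a := two_le_cycleSize_mk_iff.mp ((mem_filter.mp ha).2 ▸ hk)
    have hb : g b ≠ b := two_le_cycleSize_mk_iff.mp ((mem_filter.mp hb).2 ▸ hk)
    exact mk_eq_mk_iff_sameCycle.mpr <|
      (sameCycle_iff_cycleOf_eq_of_mem_support (mem_support.mpr ha) (mem_support.mpr hb)).mpr hab
  · intro d hd
    obtain ⟨hd, hdk⟩ := mem_filter.mp hd
    obtain ⟨a, ha⟩ := card_pos.mp (by omega : 0 < #d.support)
    have hda := cycle_is_cycleOf ha hd
    have hga : g a ≠ a := by rwa [← mem_support, ← cycleOf_mem_cycleFactorsFinset_iff, ← hda]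
    refine ⟨⟦a⟧, ?_, hda.symm⟩
    simp [cycleSize_mk_of_apply_ne hga, hdk, ← hda]

lemma card_cycleSize_eq_cycleCount {n k : ℕ} (g : Perm (Fin n)) (hk : 1 ≤ k) :
    #{c : Cycles g | cycleSize g c = k} = cycleCount g k := by
  unfold cycleCount
  split_ifs with h
  · exact h ▸ card_cycleSize_eq_one
  · exact card_cycleSize_eq_count_cycleType (by omega)

lemma prod_cycleSize_eq_prod_range {M : Type*} [CommMonoid M] (f : ℕ → M) :
    ∏ c : Cycles g, f (cycleSize g c) =
      ∏ j ∈ range (Fintype.card α), f (j + 1) ^ #{c : Cycles g | cycleSize g c = j + 1} := by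
  have hmaps (c : Cycles g) : cycleSize g c - 1 ∈ range (Fintype.card α) := by
    have := one_le_cycleSize c
    have := cycleSize_le_card c
    rw [mem_range]
    omega
  rw [← prod_fiberwise_of_maps_to (fun c _ => hmaps c)]
  refine prod_congr rfl fun j _ => ?_
  rw [← prod_const]
  refine prod_congr (filter_congr fun c _ => ?_) fun c hc => by rw [(mem_filter.mp hc).2]
  have := one_le_cycleSize c
  omega

omit [DecidableEq α] in
lemma comp_eq_self_iff_le_ker {β : Type*} (x : α → β) :
    x ∘ g = x ↔ SameCycle.setoid g ≤ Setoid.ker x := by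
  refine ⟨fun h a b hab => ?_, fun h => funext fun a => h (sameCycle_apply_left.mpr .rfl)⟩
  have hpow (i : ℕ) : x ∘ ⇑(g ^ i) = x := by
    induction i with
    | zero => rfl
    | succ i ih => rw [pow_succ, coe_mul, ← Function.comp_assoc, ih, h]
  obtain ⟨i, rfl⟩ := hab.exists_nat_pow_eq
  exact (congrFun (hpow i) a).symm

lemma prod_comp_mk_eq_prod_pow_cycleSize {M : Type*} [CommMonoid M] (f : Cycles g → M) :
    ∏ a, f ⟦a⟧ = ∏ c, f c ^ cycleSize g c := by
  rw [Finset.prod_comp, image_univ_of_surjective Quotient.mk_surjective]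
  rfl

theorem sum_fixed_prod_eq_prod_cycles {β R : Type*} [Fintype β] [DecidableEq β] [CommSemiring R]
    (t : β → R) :
    ∑ x : α → β with x ∘ g = x, ∏ a, t (x a) = ∏ c : Cycles g, ∑ i, t i ^ cycleSize g c := by
  classical
  calc ∑ x : α → β with x ∘ g = x, ∏ a, t (x a)
      = ∑ x : {x : α → β // SameCycle.setoid g ≤ Setoid.ker x}, ∏ a, t (x.1 a) :=
        sum_subtype _ (fun x => by rw [mem_filter, comp_eq_self_iff_le_ker]; simp) _
    _ = ∑ f : Cycles g → β, ∏ c, t (f c) ^ cycleSize g c :=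
        Fintype.sum_equiv (Setoid.liftEquiv _) _ _ fun x =>
          prod_comp_mk_eq_prod_pow_cycleSize (t ∘ Setoid.liftEquiv _ x)
    _ = _ := by rw [Fintype.prod_sum]

theorem sum_fixed_prod_eq_prod_powerSum_pow_cycleCount {n : ℕ} {β R : Type*} [Fintype β] [DecidableEq β]
    [CommSemiring R] (g : Perm (Fin n)) (t : β → R) :
    ∑ x : Fin n → β with g • x = x, ∏ j, t (x j) =
      ∏ j ∈ range n, (∑ i, t i ^ (j + 1)) ^ cycleCount g (j + 1) := by
  have hfix (x : Fin n → β) : g • x = x ↔ x ∘ g = x := (Equiv.comp_symm_eq g x x).trans eq_comm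
  rw [filter_congr fun x _ => hfix x, sum_fixed_prod_eq_prod_cycles,
    prod_cycleSize_eq_prod_range fun k => ∑ i, t i ^ k,
    Fintype.card_fin]
  exact prod_congr rfl fun j _ => by rw [card_cycleSize_eq_cycleCount g j.succ_pos]

end Equiv.Perm

/-- Pólya enumeration theorem: with colors `X = Fin r` and `G ≤ S_n` acting on `X^n` by
permuting coordinates, summing over the orbits the monomial `t_1^{k_1} ⋯ t_r^{k_r}`
recording the color multiplicities (of any representative, here `Quotient.out`) gives
`Z_G(p_1, …, p_n)`, where `p_j = t_1^j + ⋯ + t_r^j`. -/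
theorem stmt_11 {n r : ℕ} (G : Subgroup (Equiv.Perm (Fin n))) :
    (∑ᶠ c : Quotient (MulAction.orbitRel G (Fin n → Fin r)),
        ∏ i : Fin r, (X i : MvPolynomial (Fin r) ℚ) ^
          (Finset.univ.filter fun j : Fin n => Quotient.out c j = i).card) =
      (Nat.card G : ℚ)⁻¹ •
        ∑ᶠ g : G, ∏ j ∈ Finset.range n,
          (∑ i : Fin r, (X i : MvPolynomial (Fin r) ℚ) ^ (j + 1)) ^
            cycleCount (g : Equiv.Perm (Fin n)) (j + 1) := by
  classical
  have hG : (Nat.card G : ℚ) ≠ 0 := Nat.cast_ne_zero.mpr Nat.card_pos.ne'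
  have hw (g : G) (x : Fin n → Fin r) :
      ∏ j, (X ((g • x) j) : MvPolynomial (Fin r) ℚ) = ∏ j, X (x j) :=
    Equiv.prod_comp (g : Equiv.Perm (Fin n))⁻¹ fun j => X (x j)
  rw [finsum_eq_sum_of_fintype, finsum_eq_sum_of_fintype, eq_inv_smul_iff₀ hG,
    Nat.card_eq_fintype_card, Nat.cast_smul_eq_nsmul]
  simp_rw [prod_pow_card_filter_eq_prod]
  rw [← MulAction.sum_sum_fixed_eq_card_smul_sum_orbits
    (fun x : Fin n → Fin r => ∏ j, (X (x j) : MvPolynomial (Fin r) ℚ)) hw]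
  exact sum_congr rfl fun g _ => Equiv.Perm.sum_fixed_prod_eq_prod_powerSum_pow_cycleCount (g : Equiv.Perm (Fin n)) X
end
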